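/- arXiv:2211.04940 — 2 statements merged into one kernel-verified Lean document; each statement's English description precedes it below -/
import Mathlib

section
/- Let $L > 1$ and let $\chi : \mathbb{R}^d \to (0,\infty)$ be $(1/L)$-Lipschitz. Then there exist constants $0 < c_1 \le c_2 < \infty$ depending only on $d$ and $L$ such that for every measurable $f : \mathbb{R}^d \to [0,\infty)$, $c_1 \int_{\mathbb{R}^d} f \;\le\; \int_{\mathbb{R}^d} \Big( \frac{1}{|B_{\chi(x)}(x)|} \int_{B_{\chi(x)}(x)} f \Big)\,dx \;\le\; c_2 \int_{\mathbb{R}^d} f$. -/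
open Metric MeasureTheory ENNReal

/-!
By Tonelli, the averaged integral equals `∫ f y * w y`, where `w y` integrates
`|B_{χ x}(x)|⁻¹` over the centres `x` whose ball contains `y`. Since `χ` is `(1/L)`-Lipschitz,
every such centre has `L χ(y)/(L+1) < χ(x) < L χ(y)/(L-1)`, and all `x` within `L χ(y)/(L+1)`
of `y` are such centres. For a Haar measure this squeezes `w y` between the two ratios of the
volumes of the balls of radii `L/(L+1)` and `L/(L-1)`, uniformly in `y`.
-/

section Tonelli

variable {X : Type*} [PseudoMetricSpace X] [SecondCountableTopology X] [MeasurableSpace X]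
  [OpensMeasurableSpace X] (μ : Measure X) [SFinite μ]

theorem lintegral_setLIntegral_ball_mul_eq {r : X → ℝ} (hr : Continuous r) {f g : X → ℝ≥0∞}
    (hf : Measurable f) (hg : Measurable g) :
    ∫⁻ x, (∫⁻ y in ball x (r x), f y ∂μ) * g x ∂μ =
      ∫⁻ y, f y * ∫⁻ x in {x | dist y x < r x}, g x ∂μ ∂μ := by
  set S : Set (X × X) := {p | dist p.2 p.1 < r p.1}
  have hS : MeasurableSet S :=
    (isOpen_lt (continuous_snd.dist continuous_fst) (hr.comp continuous_fst)).measurableSet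
  have hF :
      Measurable (Function.uncurry fun x y => S.indicator (fun p => f p.2 * g p.1) (x, y)) :=
    ((hf.comp measurable_snd).mul (hg.comp measurable_fst)).indicator hS
  calc ∫⁻ x, (∫⁻ y in ball x (r x), f y ∂μ) * g x ∂μ
      = ∫⁻ x, ∫⁻ y, S.indicator (fun p => f p.2 * g p.1) (x, y) ∂μ ∂μ := by
        refine lintegral_congr fun x => ?_
        rw [← lintegral_mul_const _ hf, ← lintegral_indicator measurableSet_ball]
        refine lintegral_congr fun y => ?_
        by_cases h : dist y x < r x <;> simp [S, mem_ball, h]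
    _ = ∫⁻ y, ∫⁻ x, S.indicator (fun p => f p.2 * g p.1) (x, y) ∂μ ∂μ :=
        lintegral_lintegral_swap hF.aemeasurable
    _ = ∫⁻ y, f y * ∫⁻ x in {x | dist y x < r x}, g x ∂μ ∂μ := by
        refine lintegral_congr fun y => ?_
        have hSy : MeasurableSet {x | dist y x < r x} :=
          (isOpen_lt (continuous_const.dist continuous_id) hr).measurableSet
        rw [← lintegral_indicator hSy, ← lintegral_const_mul _ (hg.indicator hSy)]
        refine lintegral_congr fun x => ?_
        by_cases h : dist y x < r x <;> simp [S, h]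

end Tonelli

section SlowlyVaryingRadius

variable {X : Type*} [PseudoMetricSpace X] {L : ℝ} {χ : X → ℝ}

theorem continuous_of_abs_sub_le_dist_div (hlip : ∀ x y, |χ x - χ y| ≤ dist x y / L) :
    Continuous χ := by
  refine (LipschitzWith.of_dist_le_mul (K := (1 / L).toNNReal) fun x y => ?_).continuous
  calc dist (χ x) (χ y) = |χ x - χ y| := Real.dist_eq _ _
    _ ≤ 1 / L * dist x y := by simpa [div_eq_inv_mul] using hlip x y
    _ ≤ (1 / L).toNNReal * dist x y := by gcongr; exact Real.le_coe_toNNReal _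

theorem dist_lt_apply_of_dist_lt_mul (hlip : ∀ x y, |χ x - χ y| ≤ dist x y / L)
    (hL : 0 < L) {x y : X} (h : dist y x < χ y * (L / (L + 1))) : dist y x < χ x := by
  have h1 : (χ y - χ x) * L ≤ dist y x := by
    rw [← le_div_iff₀ hL, dist_comm]; linarith [(abs_le.1 (hlip x y)).1]
  rw [mul_div_assoc', lt_div_iff₀ (by linarith)] at h
  nlinarith

theorem mul_lt_apply_of_dist_lt_apply (hlip : ∀ x y, |χ x - χ y| ≤ dist x y / L)
    (hL : 0 < L) {x y : X} (h : dist y x < χ x) :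
    χ y * (L / (L + 1)) < χ x := by
  have h1 : (χ y - χ x) * L ≤ dist y x := by
    rw [← le_div_iff₀ hL, dist_comm]; linarith [(abs_le.1 (hlip x y)).1]
  rw [mul_div_assoc', div_lt_iff₀ (by linarith)]
  linarith

theorem apply_lt_mul_of_dist_lt_apply (hlip : ∀ x y, |χ x - χ y| ≤ dist x y / L)
    (hL : 1 < L) {x y : X} (h : dist y x < χ x) :
    χ x < χ y * (L / (L - 1)) := by
  have h1 : (χ x - χ y) * L ≤ dist y x := by
    rw [← le_div_iff₀ (by linarith), dist_comm]; exact (abs_le.1 (hlip x y)).2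
  rw [mul_div_assoc', lt_div_iff₀ (by linarith)]
  linarith

end SlowlyVaryingRadius

section AddHaar

variable {E : Type*} [NormedAddCommGroup E] [MeasurableSpace E] [BorelSpace E]
  (μ : Measure E) [μ.IsAddHaarMeasure]

theorem measure_ball_le_measure_ball (x y : E) {r s : ℝ} (h : r ≤ s) :
    μ (ball x r) ≤ μ (ball y s) := by
  rw [Measure.addHaar_ball_center μ x, Measure.addHaar_ball_center μ y]
  exact measure_mono (ball_subset_ball h)

theorem Measurable.measure_ball {r : E → ℝ} (hr : Measurable r) :
    Measurable fun x => μ (ball x (r x)) := by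
  simp_rw [Measure.addHaar_ball_center μ]
  exact (Monotone.measurable fun s t h => measure_mono (ball_subset_ball h)).comp hr

variable [NormedSpace ℝ E] [FiniteDimensional ℝ E]

theorem measure_ball_mul_div_measure_ball_mul (x y : E) {t : ℝ} (ht : 0 < t) (a b : ℝ) :
    μ (ball x (t * a)) / μ (ball y (t * b)) = μ (ball 0 a) / μ (ball 0 b) := by
  rw [Measure.addHaar_ball_mul_of_pos μ x ht, Measure.addHaar_ball_mul_of_pos μ y ht,
    ENNReal.mul_div_mul_left _ _ (by simp [ht]) ofReal_ne_top]

theorem lintegral_average_ball_eq {r : E → ℝ} (hr : Continuous r) {f : E → ℝ≥0∞}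
    (hf : Measurable f) :
    ∫⁻ x, (∫⁻ y in ball x (r x), f y ∂μ) / μ (ball x (r x)) ∂μ =
      ∫⁻ y, f y * ∫⁻ x in {x | dist y x < r x}, (μ (ball x (r x)))⁻¹ ∂μ ∂μ := by
  simp_rw [div_eq_mul_inv]
  exact lintegral_setLIntegral_ball_mul_eq μ hr hf (hr.measurable.measure_ball μ).inv

variable {L : ℝ}

theorem div_le_setLIntegral_inv_measure_ball (hL : 1 < L) {χ : E → ℝ}
    (hlip : ∀ x y, |χ x - χ y| ≤ dist x y / L) {y : E} (hy : 0 < χ y) :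
    μ (ball 0 (L / (L + 1))) / μ (ball 0 (L / (L - 1))) ≤
      ∫⁻ x in {x | dist y x < χ x}, (μ (ball x (χ x)))⁻¹ ∂μ := by
  have hL0 : 0 < L := by linarith
  calc μ (ball 0 (L / (L + 1))) / μ (ball 0 (L / (L - 1)))
      = ∫⁻ _ in ball y (χ y * (L / (L + 1))), (μ (ball y (χ y * (L / (L - 1)))))⁻¹ ∂μ := by
        rw [setLIntegral_const, mul_comm, ← div_eq_mul_inv,
          measure_ball_mul_div_measure_ball_mul μ y y hy]
    _ ≤ ∫⁻ x in ball y (χ y * (L / (L + 1))), (μ (ball x (χ x)))⁻¹ ∂μ := by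
        refine setLIntegral_mono' measurableSet_ball fun x hx => ?_
        rw [mem_ball'] at hx
        have hx' := dist_lt_apply_of_dist_lt_mul hlip hL0 hx
        exact ENNReal.inv_le_inv.2 (measure_ball_le_measure_ball μ x y
          (apply_lt_mul_of_dist_lt_apply hlip hL hx').le)
    _ ≤ ∫⁻ x in {x | dist y x < χ x}, (μ (ball x (χ x)))⁻¹ ∂μ :=
        lintegral_mono_set fun x hx =>
          dist_lt_apply_of_dist_lt_mul hlip hL0 (by rwa [mem_ball'] at hx)

theorem setLIntegral_inv_measure_ball_le_div (hL : 1 < L) {χ : E → ℝ}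
    (hlip : ∀ x y, |χ x - χ y| ≤ dist x y / L) {y : E} (hy : 0 < χ y) :
    ∫⁻ x in {x | dist y x < χ x}, (μ (ball x (χ x)))⁻¹ ∂μ ≤
      μ (ball 0 (L / (L - 1))) / μ (ball 0 (L / (L + 1))) := by
  have hL0 : 0 < L := by linarith
  have hS : MeasurableSet {x | dist y x < χ x} :=
    (isOpen_lt (continuous_const.dist continuous_id)
      (continuous_of_abs_sub_le_dist_div hlip)).measurableSet
  calc ∫⁻ x in {x | dist y x < χ x}, (μ (ball x (χ x)))⁻¹ ∂μ
      ≤ ∫⁻ _ in {x | dist y x < χ x}, (μ (ball y (χ y * (L / (L + 1)))))⁻¹ ∂μ :=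
        setLIntegral_mono' hS fun x hx => ENNReal.inv_le_inv.2 <|
          measure_ball_le_measure_ball μ y x (mul_lt_apply_of_dist_lt_apply hlip hL0 hx).le
    _ ≤ ∫⁻ _ in ball y (χ y * (L / (L - 1))), (μ (ball y (χ y * (L / (L + 1)))))⁻¹ ∂μ :=
        lintegral_mono_set fun x (hx : dist y x < χ x) => by
          rw [mem_ball']; exact hx.trans (apply_lt_mul_of_dist_lt_apply hlip hL hx)
    _ = μ (ball 0 (L / (L - 1))) / μ (ball 0 (L / (L + 1))) := by
        rw [setLIntegral_const, mul_comm, ← div_eq_mul_inv,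
          measure_ball_mul_div_measure_ball_mul μ y y hy]

end AddHaar

theorem stmt4 {d : ℕ} (L : ℝ) (hL : 1 < L)
    (χ : EuclideanSpace ℝ (Fin d) → ℝ) (hpos : ∀ x, 0 < χ x)
    (hlip : ∀ x y, |χ x - χ y| ≤ dist x y / L) :
    ∃ c1 c2 : ℝ≥0∞, 0 < c1 ∧ c1 ≤ c2 ∧ c2 < ⊤ ∧
      ∀ f : EuclideanSpace ℝ (Fin d) → ℝ≥0∞, Measurable f →
        c1 * (∫⁻ x, f x) ≤
            (∫⁻ x, (∫⁻ y in ball x (χ x), f y) / volume (ball x (χ x))) ∧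
          (∫⁻ x, (∫⁻ y in ball x (χ x), f y) / volume (ball x (χ x))) ≤
            c2 * (∫⁻ x, f x) := by
  have hsmall : volume (ball (0 : EuclideanSpace ℝ (Fin d)) (L / (L + 1))) ≠ 0 :=
    (measure_ball_pos _ _ (by positivity)).ne'
  have hlower := fun y => div_le_setLIntegral_inv_measure_ball volume hL hlip (hpos y)
  have hupper := fun y => setLIntegral_inv_measure_ball_le_div volume hL hlip (hpos y)
  refine ⟨_, _, ENNReal.div_pos hsmall measure_ball_lt_top.ne, (hlower 0).trans (hupper 0),
    ENNReal.div_lt_top measure_ball_lt_top.ne hsmall, fun f hf => ?_⟩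
  rw [lintegral_average_ball_eq volume (continuous_of_abs_sub_le_dist_div hlip) hf,
    ← lintegral_const_mul _ hf, ← lintegral_const_mul _ hf]
  constructor <;> refine lintegral_mono fun y => ?_ <;> rw [mul_comm]
  · gcongr; exact hlower y
  · gcongr; exact hupper y
end

section
/- Let $L \ge 8$ and let $\chi : \mathbb{R}^d \to (0,\infty)$ be $(1/L)$-Lipschitz. Let $X \in \mathbb{R}^d$ and $r \ge \chi(X)/4$. Then there is a constant $C = C(d, L)$ such that for every measurable $f : \mathbb{R}^d \to [0,\infty)$, $\frac{1}{|B_r(X)|}\int_{B_r(X)} f \;\le\; C\, \frac{1}{|B_{2r}(X)|}\int_{B_{2r}(X)} \Big( \frac{1}{|B_{\chi(x)}(x)|}\int_{B_{\chi(x)}(x)} f \Big)\,dx \;\le\; C^2\, \frac{1}{|B_{7r}(X)|}\int_{B_{7r}(X)} f$. -/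
/-!
Tonelli turns the middle quantity into `∫ f(y) K(y) dy` with
`K(y) = ∫_{B_{2r}(X)} 1{|y - x| < χ(x)} / |B_{χ(x)}(x)| dx`. As `L ≥ 8`, `χ` is `1/8`-Lipschitz, so
`χ(x)` and `χ(y)` are comparable whenever `|x - y| < χ(x)`. Hence `K ≤ (9/7)^d` everywhere,
`K` vanishes off `B_{7r}(X)` because `χ ≤ 4r + r/4` on `B_{2r}(X)`, and `K ≥ (8/41)^d` on `B_r(X)`,
where the ball `B_{χ(y)/5}(y) ⊆ B_{2r}(X)` alone contributes that much. Comparing the volumes of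
concentric balls by Haar scaling gives both inequalities with `C = 11^d`.
-/

open Metric MeasureTheory ENNReal Set Function Module

lemma abs_sub_le_dist_div_eight {α : Type*} [PseudoMetricSpace α] {χ : α → ℝ}
    (hχ : LipschitzWith 8⁻¹ χ) (x y : α) : |χ x - χ y| ≤ dist x y / 8 := by
  have := hχ.dist_le_mul x y
  rwa [Real.dist_eq, NNReal.coe_inv, NNReal.coe_ofNat, inv_mul_eq_div] at this

lemma ENNReal.div_le_mul_div_of_le_mul {I M a b V : ℝ≥0∞} (h : I ≤ a * M) (hb0 : b ≠ 0)
    (hbt : b ≠ ⊤) : I / V ≤ a * b * (M / (b * V)) := by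
  rw [← ENNReal.mul_div_mul_left I V hb0 hbt]
  calc b * I / (b * V) ≤ b * (a * M) / (b * V) := by gcongr
    _ = a * b * (M / (b * V)) := by simp only [div_eq_mul_inv]; ring

noncomputable def ballKernel {α : Type*} [PseudoMetricSpace α] [MeasurableSpace α] (μ : Measure α)
    (χ : α → ℝ) (x y : α) : ℝ≥0∞ :=
  (ball x (χ x)).indicator (fun _ => (μ (ball x (χ x)))⁻¹) y

section Kernel

variable {α : Type*} [PseudoMetricSpace α] [MeasurableSpace α] [OpensMeasurableSpace α]
  {μ : Measure α} {χ : α → ℝ}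

lemma lintegral_mul_ballKernel {f : α → ℝ≥0∞} (hf : Measurable f) (x : α) :
    ∫⁻ y, f y * ballKernel μ χ x y ∂μ = (∫⁻ y in ball x (χ x), f y ∂μ) / μ (ball x (χ x)) := by
  simp_rw [ballKernel, ← indicator_mul_right]
  rw [lintegral_indicator measurableSet_ball, lintegral_mul_const _ hf, div_eq_mul_inv]

lemma setLIntegral_ballKernel_eq_zero (hχ : LipschitzWith 8⁻¹ χ) {X : α} {r : ℝ}
    (hr : χ X ≤ 4 * r) {y : α} (hy : y ∉ ball X (7 * r)) :
    ∫⁻ x in ball X (2 * r), ballKernel μ χ x y ∂μ = 0 := by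
  refine (setLIntegral_congr_fun measurableSet_ball fun x hx => ?_).trans lintegral_zero
  refine indicator_of_notMem (fun hyx => hy ?_) _
  have hxX := abs_le.mp (abs_sub_le_dist_div_eight hχ x X)
  rw [mem_ball] at hx hyx ⊢
  linarith [dist_triangle y x X]

variable [SecondCountableTopology α] [SFinite μ]

lemma measurable_uncurry_ballKernel (hχ : Measurable χ) :
    Measurable (uncurry (ballKernel μ χ)) := by
  have hS : MeasurableSet {p : α × α | dist p.2 p.1 < χ p.1} :=
    measurableSet_lt (measurable_snd.dist measurable_fst) (hχ.comp measurable_fst)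
  have hV : Measurable fun x => μ (ball x (χ x)) := measurable_measure_prodMk_left hS
  exact (hV.comp measurable_fst).inv.indicator hS

lemma setLIntegral_ballAverage_eq (hχ : Measurable χ) {f : α → ℝ≥0∞} (hf : Measurable f)
    (s : Set α) :
    ∫⁻ x in s, (∫⁻ y in ball x (χ x), f y ∂μ) / μ (ball x (χ x)) ∂μ
      = ∫⁻ y, f y * ∫⁻ x in s, ballKernel μ χ x y ∂μ ∂μ := by
  have hk := measurable_uncurry_ballKernel (μ := μ) hχ
  simp_rw [← lintegral_mul_ballKernel hf]
  rw [lintegral_lintegral_swap ((hf.comp measurable_snd).mul hk).aemeasurable]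
  exact lintegral_congr fun y => lintegral_const_mul _ hk.of_uncurry_right

end Kernel

section Haar

variable {E : Type*} [NormedAddCommGroup E] [NormedSpace ℝ E] [FiniteDimensional ℝ E]
  [MeasurableSpace E] [BorelSpace E] (μ : Measure E) [μ.IsAddHaarMeasure]

lemma measure_ball_mul (x : E) {t : ℝ} (ht : 0 < t) (s : ℝ) :
    μ (ball x (t * s)) = ENNReal.ofReal (t ^ finrank ℝ E) * μ (ball x s) := by
  rw [Measure.addHaar_ball_mul_of_pos μ x ht, Measure.addHaar_ball_center μ x]

lemma measure_ball_mul_div (x : E) {t s : ℝ} (ht : 0 < t) (hs : 0 < s) :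
    μ (ball x (t * s)) / μ (ball x s) = ENNReal.ofReal (t ^ finrank ℝ E) := by
  rw [measure_ball_mul μ x ht,
    ENNReal.mul_div_cancel_right (measure_ball_pos μ x hs).ne' measure_ball_lt_top.ne]

variable {μ} {χ : E → ℝ} (hχ : LipschitzWith 8⁻¹ χ) (hpos : ∀ x, 0 < χ x)
include hχ hpos

lemma lintegral_ballKernel_le (y : E) :
    ∫⁻ x, ballKernel μ χ x y ∂μ ≤ ENNReal.ofReal ((9 / 7) ^ finrank ℝ E) := by
  have hy := hpos y
  have hk : ∀ x, ballKernel μ χ x y ≤ (ball y (9 / 7 * (8 / 9 * χ y))).indicator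
      (fun _ => (μ (ball y (8 / 9 * χ y)))⁻¹) x := by
    intro x
    by_cases hx : y ∈ ball x (χ x)
    · have hxy := abs_le.mp (abs_sub_le_dist_div_eight hχ x y)
      have hyx : dist x y < χ x := by rwa [mem_ball, dist_comm] at hx
      rw [ballKernel, indicator_of_mem hx,
        indicator_of_mem (mem_ball.2 (by linarith)), Measure.addHaar_ball_center μ x,
        Measure.addHaar_ball_center μ y]
      gcongr
      linarith
    · rw [ballKernel, indicator_of_notMem hx]
      exact zero_le
  calc ∫⁻ x, ballKernel μ χ x y ∂μ
      ≤ ∫⁻ x, (ball y (9 / 7 * (8 / 9 * χ y))).indicator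
          (fun _ => (μ (ball y (8 / 9 * χ y)))⁻¹) x ∂μ := lintegral_mono hk
    _ = ENNReal.ofReal ((9 / 7) ^ finrank ℝ E) := by
      rw [lintegral_indicator_const measurableSet_ball, mul_comm, ← div_eq_mul_inv,
        measure_ball_mul_div μ y (by norm_num) (by positivity)]

lemma one_le_mul_setLIntegral_ballKernel (y : E) :
    1 ≤ ENNReal.ofReal ((41 / 8) ^ finrank ℝ E)
      * ∫⁻ x in ball y (χ y / 5), ballKernel μ χ x y ∂μ := by
  have hy := hpos y
  have hk : ∀ x ∈ ball y (χ y / 5),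
      (μ (ball y (41 / 8 * (χ y / 5))))⁻¹ ≤ ballKernel μ χ x y := by
    intro x hx
    have hxy := abs_le.mp (abs_sub_le_dist_div_eight hχ x y)
    rw [mem_ball] at hx
    rw [ballKernel, indicator_of_mem (mem_ball.2 (by rw [dist_comm]; linarith)),
      Measure.addHaar_ball_center μ x, Measure.addHaar_ball_center μ y]
    gcongr
    linarith
  have hB0 : μ (ball y (χ y / 5)) ≠ 0 := (measure_ball_pos μ y (by positivity)).ne'
  have hBt : μ (ball y (χ y / 5)) ≠ ⊤ := measure_ball_lt_top.ne
  calc (1 : ℝ≥0∞)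
    _ = ENNReal.ofReal ((41 / 8) ^ finrank ℝ E) * μ (ball y (χ y / 5))
        / μ (ball y (41 / 8 * (χ y / 5))) := by
      rw [measure_ball_mul μ y (by norm_num), ENNReal.div_self
        (mul_ne_zero (by positivity) hB0) (mul_ne_top ofReal_ne_top hBt)]
    _ = ENNReal.ofReal ((41 / 8) ^ finrank ℝ E)
        * ∫⁻ _x in ball y (χ y / 5), (μ (ball y (41 / 8 * (χ y / 5))))⁻¹ ∂μ := by
      rw [setLIntegral_const, div_eq_mul_inv, mul_assoc, mul_comm (μ _)]
    _ ≤ _ := by gcongr 1; exact setLIntegral_mono' measurableSet_ball hk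

variable {X : E} {r : ℝ} (hr : χ X ≤ 4 * r)
include hr

lemma lintegral_ballAverage_le {f : E → ℝ≥0∞} (hf : Measurable f) :
    ∫⁻ x in ball X (2 * r), (∫⁻ y in ball x (χ x), f y ∂μ) / μ (ball x (χ x)) ∂μ
      ≤ ENNReal.ofReal ((9 / 7) ^ finrank ℝ E) * ∫⁻ y in ball X (7 * r), f y ∂μ := by
  rw [setLIntegral_ballAverage_eq hχ.continuous.measurable hf, ← lintegral_const_mul _ hf,
    ← lintegral_indicator measurableSet_ball]
  refine lintegral_mono fun y => ?_
  by_cases hy : y ∈ ball X (7 * r)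
  · rw [indicator_of_mem hy, mul_comm]
    gcongr
    exact (setLIntegral_le_lintegral _ _).trans (lintegral_ballKernel_le hχ hpos y)
  · rw [indicator_of_notMem hy, setLIntegral_ballKernel_eq_zero hχ hr hy, mul_zero]

lemma setLIntegral_le_mul_lintegral_ballAverage {f : E → ℝ≥0∞} (hf : Measurable f) :
    ∫⁻ y in ball X r, f y ∂μ ≤ ENNReal.ofReal ((41 / 8) ^ finrank ℝ E)
      * ∫⁻ x in ball X (2 * r), (∫⁻ y in ball x (χ x), f y ∂μ) / μ (ball x (χ x)) ∂μ := by
  rw [setLIntegral_ballAverage_eq hχ.continuous.measurable hf]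
  refine (setLIntegral_mono' measurableSet_ball fun y hy => ?_).trans
    ((setLIntegral_le_lintegral _ _).trans (lintegral_const_mul' _ _ ofReal_ne_top).le)
  have hyX := abs_le.mp (abs_sub_le_dist_div_eight hχ y X)
  have hsub : ball y (χ y / 5) ⊆ ball X (2 * r) := fun x hx => by
    rw [mem_ball] at hx hy ⊢
    linarith [dist_triangle x y X]
  calc f y ≤ f y * (ENNReal.ofReal ((41 / 8) ^ finrank ℝ E)
          * ∫⁻ x in ball y (χ y / 5), ballKernel μ χ x y ∂μ) :=
        le_mul_of_one_le_right' (one_le_mul_setLIntegral_ballKernel hχ hpos y)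
    _ ≤ _ := by
      rw [mul_left_comm]
      exact mul_le_mul_right (mul_le_mul_right (lintegral_mono_set hsub) _) _

theorem average_ball_le_mul_average_ballAverage {f : E → ℝ≥0∞} (hf : Measurable f) :
    (∫⁻ y in ball X r, f y ∂μ) / μ (ball X r)
      ≤ ENNReal.ofReal (11 ^ finrank ℝ E)
        * ((∫⁻ x in ball X (2 * r), (∫⁻ y in ball x (χ x), f y ∂μ) / μ (ball x (χ x)) ∂μ)
          / μ (ball X (2 * r))) := by
  have hr0 : 0 < r := by linarith [hpos X]
  rw [measure_ball_mul μ X two_pos r]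
  calc _ ≤ ENNReal.ofReal ((41 / 8) ^ finrank ℝ E) * ENNReal.ofReal (2 ^ finrank ℝ E)
        * ((∫⁻ x in ball X (2 * r), (∫⁻ y in ball x (χ x), f y ∂μ) / μ (ball x (χ x)) ∂μ)
          / (ENNReal.ofReal (2 ^ finrank ℝ E) * μ (ball X r))) :=
      ENNReal.div_le_mul_div_of_le_mul (setLIntegral_le_mul_lintegral_ballAverage hχ hpos hr hf)
        (ENNReal.ofReal_pos.2 (by positivity)).ne' ofReal_ne_top
    _ ≤ _ := by
      rw [← ofReal_mul (by positivity), ← mul_pow]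
      gcongr
      norm_num

theorem average_ballAverage_le_mul_average_ball {f : E → ℝ≥0∞} (hf : Measurable f) :
    (∫⁻ x in ball X (2 * r), (∫⁻ y in ball x (χ x), f y ∂μ) / μ (ball x (χ x)) ∂μ)
        / μ (ball X (2 * r))
      ≤ ENNReal.ofReal (11 ^ finrank ℝ E)
        * ((∫⁻ y in ball X (7 * r), f y ∂μ) / μ (ball X (7 * r))) := by
  have h7 : μ (ball X (7 * r))
      = ENNReal.ofReal ((7 / 2) ^ finrank ℝ E) * μ (ball X (2 * r)) := by
    rw [← measure_ball_mul μ X (by norm_num)]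
    ring_nf
  rw [h7]
  calc _ ≤ ENNReal.ofReal ((9 / 7) ^ finrank ℝ E) * ENNReal.ofReal ((7 / 2) ^ finrank ℝ E)
        * ((∫⁻ y in ball X (7 * r), f y ∂μ)
          / (ENNReal.ofReal ((7 / 2) ^ finrank ℝ E) * μ (ball X (2 * r)))) :=
      ENNReal.div_le_mul_div_of_le_mul (lintegral_ballAverage_le hχ hpos hr hf)
        (ENNReal.ofReal_pos.2 (by positivity)).ne' ofReal_ne_top
    _ ≤ _ := by
      rw [← ofReal_mul (by positivity), ← mul_pow]
      gcongr
      norm_num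

end Haar

theorem stmt5 {d : ℕ} (L : ℝ) (hL : 8 ≤ L)
    (χ : EuclideanSpace ℝ (Fin d) → ℝ) (hpos : ∀ x, 0 < χ x)
    (hlip : ∀ x y, |χ x - χ y| ≤ dist x y / L) :
    ∃ C : ℝ≥0∞, 1 ≤ C ∧ C < ⊤ ∧
      ∀ (X : EuclideanSpace ℝ (Fin d)) (r : ℝ), χ X / 4 ≤ r →
        ∀ f : EuclideanSpace ℝ (Fin d) → ℝ≥0∞, Measurable f →
          (∫⁻ z in ball X r, f z) / volume (ball X r) ≤
              C * ((∫⁻ x in ball X (2 * r),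
                    (∫⁻ y in ball x (χ x), f y) / volume (ball x (χ x))) /
                  volume (ball X (2 * r))) ∧
            C * ((∫⁻ x in ball X (2 * r),
                  (∫⁻ y in ball x (χ x), f y) / volume (ball x (χ x))) /
                volume (ball X (2 * r))) ≤
              C ^ 2 * ((∫⁻ z in ball X (7 * r), f z) / volume (ball X (7 * r))) := by
  have hχ : LipschitzWith 8⁻¹ χ := LipschitzWith.of_dist_le_mul fun x y => by
    rw [Real.dist_eq, NNReal.coe_inv, NNReal.coe_ofNat, inv_mul_eq_div]
    exact (hlip x y).trans (div_le_div_of_nonneg_left dist_nonneg (by norm_num) hL)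
  refine ⟨ENNReal.ofReal (11 ^ finrank ℝ (EuclideanSpace ℝ (Fin d))),
    ENNReal.one_le_ofReal.2 (one_le_pow₀ (by norm_num)), ofReal_lt_top,
    fun X r hr f hf => ⟨?_, ?_⟩⟩
  · exact average_ball_le_mul_average_ballAverage hχ hpos (by linarith) hf
  · rw [sq, mul_assoc]
    exact mul_le_mul_right (average_ballAverage_le_mul_average_ball hχ hpos (by linarith) hf) _
end
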